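/- Let f ≥ 1 and L ≥ 1 be integers. Then |𝒟_f| ≤ n²·(2L+2)^f; that is, the number of distinct paths that arise as a contiguous subpath of exactly L edges of the unique shortest path P_G(s,t,F), over all s,t ∈ V and all F ⊆ V ∪ E with |F| ≤ f, is at most n²·(2L+2)^f. (With the paper's parameter L = n^{ε/f}, this gives |𝒟_f| = O(n^{2+ε}).) -/

import Mathlib

open scoped ENNReal

namespace DSO

variable {V : Type*}

/-- `p` is a walk from `u` to `w` in the graph with edge relation `E`:
a nonempty list of vertices, consecutive vertices joined by edges. -/
def IsWalk (E : V → V → Prop) (p : List V) (u w : V) : Prop :=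
  p ≠ [] ∧ p.head? = some u ∧ p.getLast? = some w ∧ p.Chain' E

/-- The number of edges of a path given as a list of vertices. -/
def pathLen (p : List V) : ℕ := p.length - 1

/-- Total weight of a path, for real edge weights `w`. -/
def wt (w : V → V → ℝ) : List V → ℝ
  | [] => 0
  | [_] => 0
  | a :: b :: rest => w a b + wt w (b :: rest)

/-- Total weight of a path, for `ℝ≥0∞`-valued edge weights `w`. -/
noncomputable def ewt (w : V → V → ℝ≥0∞) : List V → ℝ≥0∞
  | [] => 0
  | [_] => 0
  | a :: b :: rest => w a b + ewt w (b :: rest)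

/-- A failure set `F ⊆ V ∪ E` is modelled as a set in `V ⊕ V × V`.
`IsFWalk E F p u w`: `p` is a `u`-to-`w` walk in `G ∖ F`, i.e. it uses no failed edge and
visits no failed vertex. -/
def IsFWalk (E : V → V → Prop) (F : Set (V ⊕ V × V)) (p : List V) (u w : V) : Prop :=
  IsWalk (fun a b => E a b ∧ Sum.inr (a, b) ∉ F) p u w ∧ ∀ x ∈ p, Sum.inl x ∉ F

/-- `d_G(u, x, F)`: the minimum weight of a `u`-to-`x` path in `G ∖ F` (`⊤` if none). -/
noncomputable def fdist (E : V → V → Prop) (w : V → V → ℝ) (F : Set (V ⊕ V × V))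
    (u x : V) : ℝ≥0∞ :=
  sInf ((fun p => ENNReal.ofReal (wt w p)) '' {p | IsFWalk E F p u x})

/-- `d^L_G(u, x, F)`: the minimum weight of a `u`-to-`x` path in `G ∖ F` containing at most
`L` edges (`⊤` if none). -/
noncomputable def fdistL (E : V → V → Prop) (w : V → V → ℝ) (F : Set (V ⊕ V × V))
    (L : ℕ) (u x : V) : ℝ≥0∞ :=
  sInf ((fun p => ENNReal.ofReal (wt w p)) '' {p | IsFWalk E F p u x ∧ pathLen p ≤ L})

/-- Weighted distance in an abstract `ℝ≥0∞`-weighted digraph `(E, w)`. -/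
noncomputable def ewdist (E : V → V → Prop) (w : V → V → ℝ≥0∞) (u x : V) : ℝ≥0∞ :=
  sInf ((fun p => ewt w p) '' {p | IsWalk E p u x})

/-- `𝒟_f`: the family of all contiguous subpaths with exactly `L` edges of the (unique)
shortest paths `P_G(s,t,F)`, over all `s, t ∈ V` and all `F ⊆ V ∪ E` with `|F| ≤ f`. -/
def Dfam (E : V → V → Prop) (w : V → V → ℝ) (f L : ℕ) : Set (List V) :=
  {Q | ∃ (s t : V) (F : Set (V ⊕ V × V)) (Pst : List V),
      F.Finite ∧ F.ncard ≤ f ∧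
      IsFWalk E F Pst s t ∧ ENNReal.ofReal (wt w Pst) = fdist E w F s t ∧
      Q <:+: Pst ∧ pathLen Q = L ∧ Q ≠ []}

end DSO

/-! Fix the endpoints `u, x` of a path `Q ∈ 𝒟_f` coming from `P_G(s,t,F)`. Since subpaths of
shortest paths are shortest, `Q` is the unique shortest `u`-`x` path with at most `L` edges in
`G ∖ F`. Starting from `G ∖ ∅`, repeatedly take
the shortest such path in the current graph; if it meets an element of `F` not yet removed,
record that element's position on the path (one of `2L + 1` vertices and edges) and remove it.
After at most `f` rounds the current path avoids all of `F`, so it is `Q`. Hence `Q` is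
determined by `u`, `x` and a word of `f` letters from an alphabet of `2L + 2` symbols (the
positions and "stop"). -/

namespace DSO

section Walks

variable {V : Type*} {R : V → V → Prop} {E : V → V → Prop} {F F' : Set (V ⊕ V × V)}
  {a b p q r : List V} {s t u x : V}

theorem IsFWalk.mono (hF : F' ⊆ F) (h : IsFWalk E F p u x) : IsFWalk E F' p u x :=
  ⟨⟨h.1.1, h.1.2.1, h.1.2.2.1,
      List.IsChain.imp (fun _ _ hab => ⟨hab.1, fun hg => hab.2 (hF hg)⟩) h.1.2.2.2⟩,
    fun v hv hg => h.2 v hv (hF hg)⟩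

theorem IsFWalk.infix (h : IsFWalk E F p s t) (hq : q <:+: p) (hne : q ≠ []) :
    IsFWalk E F q (q.head hne) (q.getLast hne) :=
  ⟨⟨hne, List.head?_eq_some_head hne, List.getLast?_eq_some_getLast hne,
      List.IsChain.infix h.1.2.2.2 hq⟩,
    fun v hv => h.2 v (hq.subset hv)⟩

theorem IsWalk.replace_infix (h : IsWalk R (a ++ q ++ b) s t) (hq : IsWalk R q u x)
    (hr : IsWalk R r u x) : IsWalk R (a ++ r ++ b) s t := by
  obtain ⟨-, hs, ht, hchain⟩ := h
  obtain ⟨hqne, hqu, hqx, -⟩ := hq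
  obtain ⟨hrne, hru, hrx, hrchain⟩ := hr
  have hhead : (r ++ b).head? = (q ++ b).head? := by simp [List.head?_append, hqu, hru]
  have hlast : (a ++ r).getLast? = (a ++ q).getLast? := by simp [List.getLast?_append, hqx, hrx]
  refine ⟨by simp [hrne], ?_, ?_, ?_⟩
  · rwa [List.append_assoc, List.head?_append, hhead, ← List.head?_append, ← List.append_assoc]
  · rwa [List.getLast?_append, hlast, ← List.getLast?_append]
  · change List.IsChain _ _ at hchain ⊢
    rw [List.append_assoc, List.isChain_append, List.isChain_append] at hchain ⊢
    obtain ⟨ha, ⟨-, hb, hqb⟩, haq⟩ := hchain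
    refine ⟨ha, ⟨hrchain, hb, ?_⟩, ?_⟩
    · simpa only [hrx, hqx] using hqb
    · simpa only [List.head?_append, hru, hqu] using haq

theorem IsFWalk.replace_infix (h : IsFWalk E F (a ++ q ++ b) s t) (hq : IsFWalk E F q u x)
    (hr : IsFWalk E F r u x) : IsFWalk E F (a ++ r ++ b) s t := by
  refine ⟨h.1.replace_infix hq.1 hr.1, fun v hv => ?_⟩
  simp only [List.mem_append] at hv
  rcases hv with (hv | hv) | hv
  · exact h.2 v (by simp [hv])
  · exact hr.2 v hv
  · exact h.2 v (by simp [hv])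

end Walks

section Weights

variable {V : Type*} {w : V → V → ℝ}

theorem wt_nonneg (hw : ∀ a b, 0 ≤ w a b) : ∀ p : List V, 0 ≤ wt w p
  | [] | [_] => le_rfl
  | _ :: b :: p => add_nonneg (hw _ _) (wt_nonneg hw (b :: p))

theorem wt_append_cons (v : V) (l' : List V) :
    ∀ l : List V, wt w (l ++ v :: l') = wt w (l ++ [v]) + wt w (v :: l')
  | [] => by simp [wt]
  | [a] => by simp [wt]
  | a :: c :: l => by
    have ih := wt_append_cons v l' (c :: l)
    simp only [List.cons_append] at ih ⊢
    simp only [wt, ih]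
    ring

theorem wt_append_infix {a b q : List V} {u x : V} (hu : q.head? = some u)
    (hx : q.getLast? = some x) :
    wt w (a ++ q ++ b) = wt w (a ++ [u]) + wt w q + wt w (x :: b) := by
  obtain ⟨q', rfl⟩ := List.head?_eq_some_iff.mp hu
  obtain ⟨q'', hq''⟩ := List.getLast?_eq_some_iff.mp hx
  calc wt w (a ++ u :: q' ++ b) = wt w (a ++ u :: (q' ++ b)) := by simp
    _ = wt w (a ++ [u]) + wt w (u :: q' ++ b) := wt_append_cons u _ a
    _ = wt w (a ++ [u]) + (wt w (u :: q') + wt w (x :: b)) := by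
      rw [hq'', List.append_assoc, List.singleton_append, wt_append_cons x b q'']
    _ = _ := by ring

end Weights

section Distances

variable {V : Type*} {E : V → V → Prop} {w : V → V → ℝ} {F F' : Set (V ⊕ V × V)} {L : ℕ}
  {a b p q r : List V} {s t u x : V}

theorem fdistL_mono (hF : F' ⊆ F) : fdistL E w F' L u x ≤ fdistL E w F L u x :=
  sInf_le_sInf <| Set.image_mono fun _ hp => ⟨hp.1.mono hF, hp.2⟩

theorem wt_le_of_infix_of_shortest (hw : ∀ a b, 0 ≤ w a b) (hP : IsFWalk E F (a ++ q ++ b) s t)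
    (hmin : ENNReal.ofReal (wt w (a ++ q ++ b)) = fdist E w F s t) (hq : IsFWalk E F q u x)
    (hr : IsFWalk E F r u x) : wt w q ≤ wt w r := by
  have hle : wt w (a ++ q ++ b) ≤ wt w (a ++ r ++ b) :=
    (ENNReal.ofReal_le_ofReal_iff (wt_nonneg hw _)).mp <|
      hmin ▸ sInf_le ⟨_, hP.replace_infix hq hr, rfl⟩
  rw [wt_append_infix hq.1.2.1 hq.1.2.2.1, wt_append_infix hr.1.2.1 hr.1.2.2.1] at hle
  linarith

theorem ofReal_wt_eq_fdistL_of_infix (hw : ∀ a b, 0 ≤ w a b) (hP : IsFWalk E F p s t)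
    (hmin : ENNReal.ofReal (wt w p) = fdist E w F s t) (hq : q <:+: p) (hne : q ≠ [])
    (hL : pathLen q ≤ L) :
    ENNReal.ofReal (wt w q) = fdistL E w F L (q.head hne) (q.getLast hne) := by
  have hqwalk := hP.infix hq hne
  obtain ⟨a, b, rfl⟩ := hq
  refine le_antisymm (le_sInf ?_) (sInf_le ⟨q, ⟨hqwalk, hL⟩, rfl⟩)
  rintro _ ⟨r, ⟨hr, -⟩, rfl⟩
  exact ENNReal.ofReal_le_ofReal (wt_le_of_infix_of_shortest hw hP hmin hqwalk hr)

theorem exists_ofReal_wt_eq_fdistL [Finite V] (h : ∃ p, IsFWalk E F p u x ∧ pathLen p ≤ L) :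
    ∃ p, (IsFWalk E F p u x ∧ pathLen p ≤ L) ∧
      ENNReal.ofReal (wt w p) = fdistL E w F L u x := by
  have hfin : {p | IsFWalk E F p u x ∧ pathLen p ≤ L}.Finite :=
    (List.finite_length_le V (L + 1)).subset fun p ⟨_, hp⟩ => by
      change p.length ≤ L + 1
      simp only [pathLen] at hp
      omega
  obtain ⟨p, hp, hval⟩ := (Set.Nonempty.image (fun p => ENNReal.ofReal (wt w p)) h).csInf_mem
    (hfin.image _)
  exact ⟨p, hp, hval⟩

variable (E w L) in
/-- An arbitrary list when `G ∖ F` has no `u`-`x` path with at most `L` edges. -/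
noncomputable def shortestLPath (F : Set (V ⊕ V × V)) (u x : V) : List V :=
  Classical.epsilon fun p =>
    (IsFWalk E F p u x ∧ pathLen p ≤ L) ∧ ENNReal.ofReal (wt w p) = fdistL E w F L u x

theorem shortestLPath_spec [Finite V] (h : ∃ p, IsFWalk E F p u x ∧ pathLen p ≤ L) :
    (IsFWalk E F (shortestLPath E w L F u x) u x ∧ pathLen (shortestLPath E w L F u x) ≤ L) ∧
      ENNReal.ofReal (wt w (shortestLPath E w L F u x)) = fdistL E w F L u x :=
  Classical.epsilon_spec (exists_ofReal_wt_eq_fdistL h)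

end Distances

section PathElements

variable {V : Type*} {E : V → V → Prop} {F F' : Set (V ⊕ V × V)} {L : ℕ} {p : List V} {u x : V}

variable (L) in
/-- `Fin (L + 1) ⊕ Fin L` indexes the vertices and the edges of a path with at most `L` edges. -/
def pathElem (p : List V) : Fin (L + 1) ⊕ Fin L → Option (V ⊕ V × V)
  | .inl j => p[(j : ℕ)]?.map .inl
  | .inr j => if h : (j : ℕ) + 1 < p.length then some (.inr (p[(j : ℕ)], p[(j : ℕ) + 1]))
      else none

theorem IsFWalk.of_pathElem (h : IsFWalk E F' p u x) (hL : pathLen p ≤ L)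
    (hF : ∀ c g, pathElem L p c = some g → g ∈ F → g ∈ F') : IsFWalk E F p u x := by
  obtain ⟨⟨hne, hu, hx, hchain⟩, hv⟩ := h
  simp only [pathLen] at hL
  refine ⟨⟨hne, hu, hx, ?_⟩, fun v hvp hvF => ?_⟩
  · change List.IsChain _ _ at hchain ⊢
    rw [List.isChain_iff_getElem] at hchain ⊢
    intro i hi
    refine ⟨(hchain i hi).1, fun hiF => (hchain i hi).2 (hF (.inr ⟨i, by omega⟩) _ ?_ hiF)⟩
    simp [pathElem, hi]
  · obtain ⟨i, hi, rfl⟩ := List.getElem_of_mem hvp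
    exact hv _ hvp (hF (.inl ⟨i, by omega⟩) _ (by simp [pathElem, hi]) hvF)

end PathElements

section Encoding

variable {X C : Type*} (probe : Set X → C → Option X)

def decodeStep (G : Set X) (c : Option C) : Set X :=
  (c.bind (probe G)).elim G (insert · G)

def decode : (k : ℕ) → (Fin k → Option C) → Set X → Set X
  | 0, _, G => G
  | k + 1, σ, G => decode k (Fin.tail σ) (decodeStep probe G (σ 0))

theorem decode_none : ∀ (k : ℕ) (G : Set X), decode probe k (fun _ => none) G = G
  | 0, _ => rfl
  | k + 1, G => decode_none k G

theorem exists_decode_saturated {F : Set X} (hF : F.Finite) :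
    ∀ (k : ℕ) (G : Set X), G ⊆ F → (F \ G).ncard ≤ k → ∃ σ : Fin k → Option C,
      decode probe k σ G ⊆ F ∧
        ∀ c g, probe (decode probe k σ G) c = some g → g ∈ F → g ∈ decode probe k σ G
  | 0, G, hGF, hk => by
    have hFG : F \ G = ∅ := (Set.ncard_eq_zero hF.sdiff).mp (Nat.le_zero.mp hk)
    exact ⟨Fin.elim0, hGF, fun _ g _ hg => by_contra fun h => hFG.subset ⟨hg, h⟩⟩
  | k + 1, G, hGF, hk => by
    by_cases hnew : ∃ c g, probe G c = some g ∧ g ∈ F ∧ g ∉ G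
    · obtain ⟨c, g, hc, hgF, hgG⟩ := hnew
      have hstep : decodeStep probe G (some c) = insert g G := by simp [decodeStep, hc]
      have hcard : (F \ insert g G).ncard ≤ k := by
        have hg : g ∈ F \ G := ⟨hgF, hgG⟩
        rw [← Set.union_singleton, ← Set.sdiff_sdiff, Set.ncard_sdiff_singleton_of_mem hg]
        omega
      obtain ⟨σ, hσ⟩ :=
        exists_decode_saturated hF k (insert g G) (Set.insert_subset hgF hGF) hcard
      exact ⟨Fin.cons (some c) σ, by simpa [decode, hstep] using hσ⟩
    · push Not at hnew
      refine ⟨fun _ => none, ?_⟩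
      rw [decode_none]
      exact ⟨hGF, fun c g hc hgF => hnew c g hc hgF⟩

end Encoding

section Compression

variable {V : Type*} {E : V → V → Prop} {w : V → V → ℝ} {F : Set (V ⊕ V × V)} {f L : ℕ}
  {q : List V} {u x : V}

variable (E w L) in
noncomputable def decodePath (u x : V) (σ : Fin f → Option (Fin (L + 1) ⊕ Fin L)) : List V :=
  shortestLPath E w L (decode (fun G => pathElem L (shortestLPath E w L G u x)) f σ ∅) u x

theorem exists_decodePath_eq [Finite V] (hF : F.Finite) (hFf : F.ncard ≤ f)
    (hq : IsFWalk E F q u x) (hqL : pathLen q ≤ L)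
    (huniq : ∀ p, IsFWalk E F p u x → pathLen p ≤ L →
      ENNReal.ofReal (wt w p) = fdistL E w F L u x → p = q) :
    ∃ σ : Fin f → Option (Fin (L + 1) ⊕ Fin L), decodePath E w L u x σ = q := by
  obtain ⟨σ, hGF, hsat⟩ := exists_decode_saturated
    (fun G => pathElem L (shortestLPath E w L G u x)) hF f ∅ (Set.empty_subset F)
    (by rwa [Set.sdiff_empty])
  obtain ⟨⟨hpG, hpL⟩, hpmin⟩ := shortestLPath_spec (w := w) ⟨q, hq.mono hGF, hqL⟩
  have hpF := hpG.of_pathElem hpL hsat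
  refine ⟨σ, huniq _ hpF hpL (le_antisymm ?_ (sInf_le ⟨_, ⟨hpF, hpL⟩, rfl⟩))⟩
  exact hpmin ▸ fdistL_mono hGF

end Compression

end DSO

theorem stmt13_general {V : Type*} [Fintype V]
    (E : V → V → Prop) (w : V → V → ℝ) (hw : ∀ a b, 0 ≤ w a b)
    (n : ℕ) (hn : Fintype.card V = n)
    (f L : ℕ)
    (huniqL : ∀ (u x : V) (F : Set (V ⊕ V × V)), F.Finite → F.ncard ≤ f → ∀ L' : ℕ,
      ∀ p q : List V,
        DSO.IsFWalk E F p u x → DSO.pathLen p ≤ L' →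
          ENNReal.ofReal (DSO.wt w p) = DSO.fdistL E w F L' u x →
        DSO.IsFWalk E F q u x → DSO.pathLen q ≤ L' →
          ENNReal.ofReal (DSO.wt w q) = DSO.fdistL E w F L' u x →
        p = q) :
    (DSO.Dfam E w f L).Finite ∧
    (DSO.Dfam E w f L).ncard ≤ n ^ 2 * (2 * L + 2) ^ f := by
  let pathOfCode : V × V × (Fin f → Option (Fin (L + 1) ⊕ Fin L)) → List V :=
    fun k => DSO.decodePath E w L k.1 k.2.1 k.2.2
  have hsub : DSO.Dfam E w f L ⊆ Set.range pathOfCode := by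
    rintro Q ⟨s, t, F, P, hF, hFf, hP, hPmin, hQP, hQL, hQne⟩
    have hQ := hP.infix hQP hQne
    have hQmin := DSO.ofReal_wt_eq_fdistL_of_infix hw hP hPmin hQP hQne hQL.le
    obtain ⟨σ, hσ⟩ := DSO.exists_decodePath_eq hF hFf hQ hQL.le fun p hp hpL hpmin =>
      huniqL _ _ F hF hFf L p Q hp hpL hpmin hQ hQL.le hQmin
    exact ⟨(_, _, σ), hσ⟩
  refine ⟨(Set.finite_range pathOfCode).subset hsub, ?_⟩
  calc (DSO.Dfam E w f L).ncard ≤ (Set.range pathOfCode).ncard := Set.ncard_le_ncard hsub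
    _ ≤ Nat.card (V × V × (Fin f → Option (Fin (L + 1) ⊕ Fin L))) :=
      Finite.card_range_le pathOfCode
    _ = n ^ 2 * (2 * L + 2) ^ f := by
      simp only [Nat.card_eq_fintype_card, Fintype.card_prod, Fintype.card_fun,
        Fintype.card_option, Fintype.card_sum, Fintype.card_fin, hn]
      ring

/-- Under the unique-shortest-paths assumption, the family `𝒟_f` of all
contiguous `L`-edge subpaths of the shortest paths `P_G(s,t,F)` over all `s,t ∈ V` and all
`F ⊆ V ∪ E` with `|F| ≤ f` is finite of cardinality at most `n²·(2L+2)^f`. -/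
theorem stmt13 {V : Type*} [Fintype V]
    (E : V → V → Prop) (w : V → V → ℝ) (hw : ∀ a b, 0 ≤ w a b)
    (n : ℕ) (hn : Fintype.card V = n)
    (f L : ℕ) (hf : 1 ≤ f) (hL : 1 ≤ L)
    (huniq : ∀ (u x : V) (F : Set (V ⊕ V × V)), F.Finite → F.ncard ≤ f →
      ∀ p q : List V,
        DSO.IsFWalk E F p u x → ENNReal.ofReal (DSO.wt w p) = DSO.fdist E w F u x →
        DSO.IsFWalk E F q u x → ENNReal.ofReal (DSO.wt w q) = DSO.fdist E w F u x →
        p = q)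
    (huniqL : ∀ (u x : V) (F : Set (V ⊕ V × V)), F.Finite → F.ncard ≤ f → ∀ L' : ℕ,
      ∀ p q : List V,
        DSO.IsFWalk E F p u x → DSO.pathLen p ≤ L' →
          ENNReal.ofReal (DSO.wt w p) = DSO.fdistL E w F L' u x →
        DSO.IsFWalk E F q u x → DSO.pathLen q ≤ L' →
          ENNReal.ofReal (DSO.wt w q) = DSO.fdistL E w F L' u x →
        p = q) :
    (DSO.Dfam E w f L).Finite ∧
    (DSO.Dfam E w f L).ncard ≤ n ^ 2 * (2 * L + 2) ^ f :=
  stmt13_general E w hw n hn f L huniqL
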